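/- Fix integers m > n ≥ 1, 1 ≤ i ≤ n, and let a ∈ ℝ^{m−n} be nonzero. Set X = Σ_{ℓ=1}^{m−n} a_ℓ·(E_{i,2n+ℓ} − E_{2n+ℓ,i+n}) and Y = −(2/|a|²)·Σ_{ℓ=1}^{m−n} a_ℓ·(E_{i+n,2n+ℓ} − E_{2n+ℓ,i}), and let H = X·Y − Y·X. Then H·X − X·H = 2·X and H·Y − Y·H = −2·Y; in particular X, Y, H span a Lie subalgebra of the (m+n)×(m+n) real matrices isomorphic to sl(2,ℝ). -/

import Mathlib

/-!
With `p = e_i`, `q = e_{i+n}` and `c = Σ_ℓ a_ℓ e_{2n+ℓ}` one has `X = p cᵀ - c qᵀ` and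
`Y = -(2/|c|²) (q cᵀ - c pᵀ)`, where `p, q` are orthonormal and orthogonal to `c`. Since
`(u vᵀ)(w xᵀ) = (v·w) u xᵀ`, every product reduces to dot products: `H = 2 (p pᵀ - q qᵀ)`,
and `p pᵀ - q qᵀ` acts on `X` by `+1` and, after swapping `p` and `q`, on `Y` by `-1`.
-/

noncomputable section

open Matrix

/-- The `N × N` real matrix with `(k,l)` entry (1-based) equal to `1`
and all other entries `0`. -/
def Estd (N k l : ℕ) : Matrix (Fin N) (Fin N) ℝ :=
  Matrix.of fun p q => if p.val + 1 = k ∧ q.val + 1 = l then 1 else 0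

/-- The squared Euclidean norm `|a|²` of `a ∈ ℝ^{m−n}`. -/
def sqnorm (d : ℕ) (a : Fin d → ℝ) : ℝ := ∑ ℓ, (a ℓ) ^ 2

theorem sum_smul_vecMulVec_sub {ι κ R : Type*} [Fintype κ] [CommRing R] (a : κ → R)
    (u w : ι → R) (v : κ → ι → R) :
    ∑ ℓ, a ℓ • (vecMulVec u (v ℓ) - vecMulVec (v ℓ) w) =
      vecMulVec u (∑ ℓ, a ℓ • v ℓ) - vecMulVec (∑ ℓ, a ℓ • v ℓ) w := by
  ext r s
  simp only [Matrix.sub_apply, Matrix.smul_apply, Matrix.sum_apply, Finset.sum_apply,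
    Pi.smul_apply, vecMulVec_apply, smul_eq_mul, Finset.mul_sum, Finset.sum_mul,
    ← Finset.sum_sub_distrib]
  exact Finset.sum_congr rfl fun _ _ => by ring

section Orthonormal

variable {ι K : Type*} [Fintype ι] {p q c : ι → K}

theorem commutator_vecMulVec_sub_of_orthogonal [CommRing K] (hpp : p ⬝ᵥ p = 1)
    (hqq : q ⬝ᵥ q = 1) (hpc : p ⬝ᵥ c = 0) (hqc : q ⬝ᵥ c = 0) :
    (vecMulVec p c - vecMulVec c q) * (vecMulVec q c - vecMulVec c p) -
        (vecMulVec q c - vecMulVec c p) * (vecMulVec p c - vecMulVec c q) =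
      (c ⬝ᵥ c) • (vecMulVec q q - vecMulVec p p) := by
  simp only [sub_mul, mul_sub, vecMulVec_mul_vecMulVec, dotProduct_comm c p,
    dotProduct_comm c q, hpp, hqq, hpc, hqc, zero_smul, one_smul, vecMulVec_zero,
    vecMulVec_smul]
  module

theorem commutator_vecMulVec_self_sub_of_orthogonal [CommRing K] (hpp : p ⬝ᵥ p = 1)
    (hqq : q ⬝ᵥ q = 1) (hpq : p ⬝ᵥ q = 0) (hpc : p ⬝ᵥ c = 0) (hqc : q ⬝ᵥ c = 0) :
    (vecMulVec p p - vecMulVec q q) * (vecMulVec p c - vecMulVec c q) -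
        (vecMulVec p c - vecMulVec c q) * (vecMulVec p p - vecMulVec q q) =
      vecMulVec p c - vecMulVec c q := by
  simp only [sub_mul, mul_sub, vecMulVec_mul_vecMulVec, dotProduct_comm c p,
    dotProduct_comm c q, dotProduct_comm q p, hpp, hqq, hpq, hpc, hqc, zero_smul, one_smul,
    vecMulVec_zero]
  abel

theorem sl2_triple_of_orthogonal [Field K] (hpp : p ⬝ᵥ p = 1) (hqq : q ⬝ᵥ q = 1)
    (hpq : p ⬝ᵥ q = 0) (hpc : p ⬝ᵥ c = 0) (hqc : q ⬝ᵥ c = 0) (hcc : c ⬝ᵥ c ≠ 0)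
    {X Y H : Matrix ι ι K} (hX : X = vecMulVec p c - vecMulVec c q)
    (hY : Y = (-(2 / (c ⬝ᵥ c))) • (vecMulVec q c - vecMulVec c p))
    (hH : H = X * Y - Y * X) :
    H * X - X * H = (2 : K) • X ∧ H * Y - Y * H = (-2 : K) • Y := by
  set D := vecMulVec p p - vecMulVec q q with hD
  set Y₀ := vecMulVec q c - vecMulVec c p with hY₀
  have hH' : H = (2 : K) • D := by
    rw [hH, hY, mul_smul_comm, smul_mul_assoc, ← smul_sub, hX,
      commutator_vecMulVec_sub_of_orthogonal hpp hqq hpc hqc, smul_smul, ← neg_sub, smul_neg,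
      ← neg_smul]
    congr 1
    field_simp
  have hDX : D * X - X * D = X :=
    hX ▸ commutator_vecMulVec_self_sub_of_orthogonal hpp hqq hpq hpc hqc
  -- swapping `p` and `q` negates `D` and turns `X` into `Y₀`
  have hDY : D * Y₀ - Y₀ * D = -Y₀ := by
    have h := commutator_vecMulVec_self_sub_of_orthogonal hqq hpp
      (by rwa [dotProduct_comm]) hqc hpc
    rw [← neg_sub (vecMulVec p p) (vecMulVec q q), ← hD, ← hY₀, neg_mul, mul_neg,
      sub_neg_eq_add, neg_add_eq_sub] at h
    rw [← neg_sub, h]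
  constructor
  · rw [hH', smul_mul_assoc, mul_smul_comm, ← smul_sub, hDX]
  · rw [hH', hY, smul_mul_smul_comm, smul_mul_smul_comm]
    linear_combination (norm := module) (2 * -(2 / (c ⬝ᵥ c))) • hDY

end Orthonormal

/-- The `k`-th standard basis vector of `ℝ^N`, indexed from `1` (zero when `k ∉ [1, N]`). -/
def unitVec (N k : ℕ) : Fin N → ℝ := fun r => if r.val + 1 = k then 1 else 0

theorem Estd_eq_vecMulVec (N k l : ℕ) :
    Estd N k l = vecMulVec (unitVec N k) (unitVec N l) := by
  ext r s
  simp only [Estd, unitVec, vecMulVec_apply, of_apply, ite_and, ite_mul, one_mul, zero_mul]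

section UnitVec

variable {N : ℕ}

theorem unitVec_dotProduct_unitVec_of_ne {k l : ℕ} (h : k ≠ l) :
    unitVec N k ⬝ᵥ unitVec N l = 0 := by
  refine Finset.sum_eq_zero fun r _ => ?_
  simp only [unitVec]
  split_ifs <;> simp_all

theorem unitVec_dotProduct_self {k : ℕ} (h1 : 1 ≤ k) (h2 : k ≤ N) :
    unitVec N k ⬝ᵥ unitVec N k = 1 := by
  rw [dotProduct, Finset.sum_eq_single ⟨k - 1, by omega⟩]
  · simp [unitVec, show k - 1 + 1 = k by omega]
  · intro r _ hr
    have : r.val + 1 ≠ k := fun h => hr (Fin.ext (by simp; omega))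
    simp [unitVec, this]
  · simp

variable {κ : Type*} [Fintype κ] (a : κ → ℝ) {f : κ → ℕ}

theorem unitVec_dotProduct_sum_of_forall_ne {k : ℕ} (h : ∀ ℓ, k ≠ f ℓ) :
    unitVec N k ⬝ᵥ ∑ ℓ, a ℓ • unitVec N (f ℓ) = 0 := by
  simp [dotProduct_sum, dotProduct_smul, unitVec_dotProduct_unitVec_of_ne (h _)]

theorem unitVec_dotProduct_sum_of_injective (hf : Function.Injective f) {j : κ}
    (h1 : 1 ≤ f j) (h2 : f j ≤ N) :
    unitVec N (f j) ⬝ᵥ ∑ ℓ, a ℓ • unitVec N (f ℓ) = a j := by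
  rw [dotProduct_sum, Finset.sum_eq_single j]
  · rw [dotProduct_smul, unitVec_dotProduct_self h1 h2, smul_eq_mul, mul_one]
  · intro ℓ _ hℓ
    rw [dotProduct_smul, unitVec_dotProduct_unitVec_of_ne (hf.ne hℓ.symm), smul_zero]
  · simp

theorem sum_dotProduct_sum_of_injective (hf : Function.Injective f) (h1 : ∀ ℓ, 1 ≤ f ℓ)
    (h2 : ∀ ℓ, f ℓ ≤ N) :
    (∑ ℓ, a ℓ • unitVec N (f ℓ)) ⬝ᵥ ∑ ℓ, a ℓ • unitVec N (f ℓ) = a ⬝ᵥ a := by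
  rw [sum_dotProduct]
  simp only [smul_dotProduct, unitVec_dotProduct_sum_of_injective a hf (h1 _) (h2 _), smul_eq_mul]
  rfl

end UnitVec

theorem sqnorm_eq_dotProduct (d : ℕ) (a : Fin d → ℝ) : sqnorm d a = a ⬝ᵥ a := by
  simp only [sqnorm, dotProduct, sq]

theorem sl2_triple_so_general (m n : ℕ) (hmn : n < m)
    (i : ℕ) (hi1 : 1 ≤ i) (hin : i ≤ n)
    (a : Fin (m - n) → ℝ) (ha : a ≠ 0)
    (X Y H : Matrix (Fin (m + n)) (Fin (m + n)) ℝ)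
    (hX : X = ∑ ℓ : Fin (m - n),
      a ℓ • (Estd (m + n) i (2 * n + (ℓ.val + 1)) -
        Estd (m + n) (2 * n + (ℓ.val + 1)) (i + n)))
    (hY : Y = (-(2 / sqnorm (m - n) a)) • ∑ ℓ : Fin (m - n),
      a ℓ • (Estd (m + n) (i + n) (2 * n + (ℓ.val + 1)) -
        Estd (m + n) (2 * n + (ℓ.val + 1)) i))
    (hH : H = X * Y - Y * X) :
    H * X - X * H = (2 : ℝ) • X ∧ H * Y - Y * H = (-2 : ℝ) • Y := by
  set f : Fin (m - n) → ℕ := fun ℓ => 2 * n + (ℓ.val + 1)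
  have hf : Function.Injective f := fun ℓ ℓ' h => Fin.ext (by simpa [f] using h)
  have hf1 : ∀ ℓ, 1 ≤ f ℓ := fun ℓ => by simp only [f]; omega
  have hfN : ∀ ℓ, f ℓ ≤ m + n := fun ℓ => by have := ℓ.2; simp only [f]; omega
  set p := unitVec (m + n) i
  set q := unitVec (m + n) (i + n)
  set c := ∑ ℓ, a ℓ • unitVec (m + n) (f ℓ)
  have hpp : p ⬝ᵥ p = 1 := unitVec_dotProduct_self hi1 (by omega)
  have hqq : q ⬝ᵥ q = 1 := unitVec_dotProduct_self (by omega) (by omega)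
  have hpq : p ⬝ᵥ q = 0 := unitVec_dotProduct_unitVec_of_ne (by omega)
  have hpc : p ⬝ᵥ c = 0 := unitVec_dotProduct_sum_of_forall_ne a fun ℓ => by simp only [f]; omega
  have hqc : q ⬝ᵥ c = 0 := unitVec_dotProduct_sum_of_forall_ne a fun ℓ => by simp only [f]; omega
  have hcc : c ⬝ᵥ c = sqnorm (m - n) a := by
    rw [sqnorm_eq_dotProduct, sum_dotProduct_sum_of_injective a hf hf1 hfN]
  have hc : c ⬝ᵥ c ≠ 0 := by
    rw [hcc, sqnorm_eq_dotProduct]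
    exact dotProduct_self_eq_zero.not.mpr ha
  simp only [Estd_eq_vecMulVec, sum_smul_vecMulVec_sub, ← hcc] at hX hY
  exact sl2_triple_of_orthogonal hpp hqq hpq hpc hqc hc hX hY hH

/-- **The Jacobson–Morosov `sl₂`-triple for the root vector of the root `L_i` in
`so(m,n)`** (proof of Lemma 6.2 of the paper): setting
`X = Σ_ℓ a_ℓ (E_{i,2n+ℓ} − E_{2n+ℓ,i+n})`,
`Y = −(2/|a|²) Σ_ℓ a_ℓ (E_{i+n,2n+ℓ} − E_{2n+ℓ,i})` and `H = [X,Y]`,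
one has `[H,X] = 2X` and `[H,Y] = −2Y`, so that `X, Y, H` span a copy of
`sl(2,ℝ)`. -/
theorem sl2_triple_so (m n : ℕ) (hmn : n < m) (hn : 1 ≤ n)
    (i : ℕ) (hi1 : 1 ≤ i) (hin : i ≤ n)
    (a : Fin (m - n) → ℝ) (ha : a ≠ 0)
    (X Y H : Matrix (Fin (m + n)) (Fin (m + n)) ℝ)
    (hX : X = ∑ ℓ : Fin (m - n),
      a ℓ • (Estd (m + n) i (2 * n + (ℓ.val + 1)) -
        Estd (m + n) (2 * n + (ℓ.val + 1)) (i + n)))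
    (hY : Y = (-(2 / sqnorm (m - n) a)) • ∑ ℓ : Fin (m - n),
      a ℓ • (Estd (m + n) (i + n) (2 * n + (ℓ.val + 1)) -
        Estd (m + n) (2 * n + (ℓ.val + 1)) i))
    (hH : H = X * Y - Y * X) :
    H * X - X * H = (2 : ℝ) • X ∧ H * Y - Y * H = (-2 : ℝ) • Y :=
  sl2_triple_so_general m n hmn i hi1 hin a ha X Y H hX hY hH
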